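/- Let Y_1, …, Y_n be independent, identically distributed random variables on ℝ^N whose common law has a bounded Lebesgue density f : ℝ^N → ℝ, let Ω ⊂ ℝ^N be a bounded domain, and let ψ : ℝ^N → ℝ be bounded, Borel measurable and with compact support contained in Ω. Define Y = Σ_{i=1}^n ψ(Y_i). Then for every 0 ≤ λ ≤ 1, P( |Y − E[Y]| > ‖f‖_∞ · ‖ψ‖_{L^∞(Ω)} · n · |Ω| · λ ) ≤ 2 exp( −(1/4)·‖f‖_∞ · n · |Ω| · λ² ), where |Ω| denotes the Lebesgue measure of Ω and ‖f‖_∞ the supremum norm of f. -/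

import Mathlib

open MeasureTheory ProbabilityTheory Metric Set Filter Topology
open scoped ENNReal NNReal Classical

noncomputable section

/-- Euclidean space `ℝ^N`. -/
abbrev Euc (N : ℕ) := EuclideanSpace ℝ (Fin N)

variable {N : ℕ}

/-- A bounded domain: open, connected and bounded. -/
def IsBoundedDomain (Ω : Set (Euc N)) : Prop :=
  IsOpen Ω ∧ IsConnected Ω ∧ Bornology.IsBounded Ω

/-- The uniform exterior ball condition. -/
def UnifExtBallCond (Ω : Set (Euc N)) : Prop :=
  ∃ δ : ℝ, 0 < δ ∧ ∀ y ∈ frontier Ω, ∃ z : Euc N,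
    Metric.ball z δ ⊆ Ωᶜ ∧ y ∈ Metric.sphere z δ

/-- The inner ε-strip `Γ_ε = {x ∈ Ω : dist(x,∂Ω) ≤ ε}`. -/
def strip (Ω : Set (Euc N)) (ε : ℝ) : Set (Euc N) :=
  {x | x ∈ Ω ∧ Metric.infDist x (frontier Ω) ≤ ε}

/-- A Lipschitz probability density `ϕ : Ω → [φ0, φ1]`. -/
structure IsLipDensity (Ω : Set (Euc N)) (ϕ : Euc N → ℝ) (φ0 φ1 : ℝ) : Prop where
  pos : 0 < φ0
  le : φ0 ≤ φ1
  lip : ∃ K : ℝ≥0, LipschitzOnWith K ϕ (closure Ω)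
  lower : ∀ x ∈ closure Ω, φ0 ≤ ϕ x
  upper : ∀ x ∈ closure Ω, ϕ x ≤ φ1
  int_one : ∫ x in Ω, ϕ x = 1

/-- The common law of the points of a data cloud: density `ϕ` on `Ω` w.r.t. Lebesgue. -/
def cloudMeasure (Ω : Set (Euc N)) (ϕ : Euc N → ℝ) : Measure (Euc N) :=
  volume.withDensity (fun x => ENNReal.ofReal (Ω.indicator ϕ x))

/-- A random data cloud: i.i.d. Ω-valued random variables with density `ϕ`. -/
def IsRandomCloud {Θ : Type*} [MeasurableSpace Θ] (P : Measure Θ)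
    (Ω : Set (Euc N)) (ϕ : Euc N → ℝ) {n : ℕ} (Z : Fin n → Θ → Euc N) : Prop :=
  (∀ i, Measurable (Z i)) ∧
  iIndepFun Z P ∧
  (∀ i θ, Z i θ ∈ Ω) ∧
  (∀ i, Measure.map (Z i) P = cloudMeasure Ω ϕ)

/-- `B_ε^X(x) = X ∩ B_ε(x)`. -/
def cloudBall (X : Finset (Euc N)) (x : Euc N) (ε : ℝ) : Finset (Euc N) :=
  X.filter (fun z => dist z x < ε)

/-- The (finite) set of points of a deterministic cloud. -/
def cloudPts {n : ℕ} (z : Fin n → Euc N) : Finset (Euc N) :=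
  Finset.image z Finset.univ

/-- The (finite) set of points of a random cloud at sample `θ`. -/
def cloudOf {Θ : Type*} {n : ℕ} (Z : Fin n → Θ → Euc N) (θ : Θ) : Finset (Euc N) :=
  Finset.image (fun i => Z i θ) Finset.univ

/-- The averaged (graph-Laplacian type) part:
`L₂ u(x) = (1/card B_ε^X(x)) Σ_{Z ∈ B_ε^X(x)} (u(Z) − u(x))/ε²`. -/
def tugOpMean (X : Finset (Euc N)) (ε : ℝ) (u : Euc N → ℝ) (x : Euc N) : ℝ :=
  ((∑ z ∈ cloudBall X x ε, (u z - u x)) / (cloudBall X x ε).card) / ε ^ 2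

/-- The tug-of-war (infinity-Laplacian type) part:
`L_∞ u(x) = (1/(2ε²))( min_{B_ε^X(x)} u + max_{B_ε^X(x)} u − 2u(x) )`. -/
def tugOpInf (X : Finset (Euc N)) (ε : ℝ) (u : Euc N → ℝ) (x : Euc N) : ℝ :=
  (1 / (2 * ε ^ 2)) *
    (sInf (u '' (↑(cloudBall X x ε) : Set (Euc N))) +
     sSup (u '' (↑(cloudBall X x ε) : Set (Euc N))) - 2 * u x)

/-- The tug-of-war operator `L_{X,ε} = α L_∞ + β L₂` with `α = (p−2)/(N+p)`, `β = (N+2)/(N+p)`. -/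
def tugOp (N : ℕ) (p : ℝ) (X : Finset (Euc N)) (ε : ℝ) (u : Euc N → ℝ) (x : Euc N) : ℝ :=
  ((p - 2) / ((N : ℝ) + p)) * tugOpInf X ε u x
    + (((N : ℝ) + 2) / ((N : ℝ) + p)) * tugOpMean X ε u x

/-- The Pucci-type maximal operator `L⁺_{X,ε}`. -/
def tugOpPlus (N : ℕ) (p Λ τ : ℝ) (X : Finset (Euc N)) (ε : ℝ) (u : Euc N → ℝ)
    (x : Euc N) : ℝ :=
  ((p - 2) / ((N : ℝ) + p)) / (2 * ε ^ 2) *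
      (sSup {v : ℝ | ∃ zi ∈ cloudBall X x (Λ * ε),
          ∃ zj ∈ cloudBall X ((2 : ℝ) • x - zi) (τ * ε ^ 2), v = u zi + u zj} - 2 * u x)
    + (((N : ℝ) + 2) / ((N : ℝ) + p)) * tugOpMean X ε u x

/-- The Pucci-type minimal operator `L⁻_{X,ε}`. -/
def tugOpMinus (N : ℕ) (p Λ τ : ℝ) (X : Finset (Euc N)) (ε : ℝ) (u : Euc N → ℝ)
    (x : Euc N) : ℝ :=
  ((p - 2) / ((N : ℝ) + p)) / (2 * ε ^ 2) *
      (sInf {v : ℝ | ∃ zi ∈ cloudBall X x (Λ * ε),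
          ∃ zj ∈ cloudBall X ((2 : ℝ) • x - zi) (τ * ε ^ 2), v = u zi + u zj} - 2 * u x)
    + (((N : ℝ) + 2) / ((N : ℝ) + p)) * tugOpMean X ε u x

/-- Second derivative `⟨D²ξ(x) v, w⟩` as evaluation of the second iterated derivative. -/
def hess (ξ : Euc N → ℝ) (x v w : Euc N) : ℝ :=
  iteratedFDeriv ℝ 2 ξ x ![v, w]

/-- The Laplacian `Δξ(x)` as the trace of the Hessian. -/
def lapl (ξ : Euc N → ℝ) (x : Euc N) : ℝ :=
  ∑ i : Fin N, hess ξ x (EuclideanSpace.single i (1 : ℝ)) (EuclideanSpace.single i 1)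

/-- The normalized infinity Laplacian `Δ_∞ξ = ⟨D²ξ ∇ξ, ∇ξ⟩/|∇ξ|²`. -/
def infLapl (ξ : Euc N → ℝ) (x : Euc N) : ℝ :=
  hess ξ x (gradient ξ x) (gradient ξ x) / ‖gradient ξ x‖ ^ 2

/-- The pointwise expansion
`ϕ^{-2}|∇ξ|^{2-p} div(ϕ²|∇ξ|^{p-2}∇ξ) = Δξ + (p−2)Δ_∞ξ + 2⟨∇ϕ,∇ξ⟩/ϕ`. -/
def ptwsOp (ϕ : Euc N → ℝ) (p : ℝ) (ξ : Euc N → ℝ) (x : Euc N) : ℝ :=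
  lapl ξ x + (p - 2) * infLapl ξ x
    + 2 * (inner ℝ (gradient ϕ x) (gradient ξ x) : ℝ) / ϕ x

/-- `u` is a viscosity solution of
`(N+p)/(N+2) · ϕ^{-2}|∇u|^{2-p} div(ϕ²|∇u|^{p-2}∇u) = f` in `Ω`. -/
def IsViscositySol (N : ℕ) (Ω : Set (Euc N)) (ϕ : Euc N → ℝ) (p : ℝ)
    (f u : Euc N → ℝ) : Prop :=
  ∀ x0 ∈ Ω, ∀ ξ : Euc N → ℝ, ContDiff ℝ 2 ξ → gradient ξ x0 ≠ 0 →
    (IsLocalMaxOn (fun x => u x - ξ x) Ω x0 →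
      f x0 ≤ (((N : ℝ) + p) / ((N : ℝ) + 2)) * ptwsOp ϕ p ξ x0) ∧
    (IsLocalMinOn (fun x => u x - ξ x) Ω x0 →
      (((N : ℝ) + p) / ((N : ℝ) + 2)) * ptwsOp ϕ p ξ x0 ≤ f x0)

/-- `u` is a viscosity solution of `div(ϕ²|∇u|^{p-2}∇u) = 0` in `Ω`. -/
def IsViscositySolZero (N : ℕ) (Ω : Set (Euc N)) (ϕ : Euc N → ℝ) (p : ℝ)
    (u : Euc N → ℝ) : Prop :=
  ∀ x0 ∈ Ω, ∀ ξ : Euc N → ℝ, ContDiff ℝ 2 ξ → gradient ξ x0 ≠ 0 →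
    (IsLocalMaxOn (fun x => u x - ξ x) Ω x0 → 0 ≤ ptwsOp ϕ p ξ x0) ∧
    (IsLocalMinOn (fun x => u x - ξ x) Ω x0 → ptwsOp ϕ p ξ x0 ≤ 0)

/-- The good event: a partition `U_i ∋ z_i`, `U_i ⊆ B_ρ(z_i)`, each of `ϕ_ε`-mass `1/n`,
with `‖ϕ_ε − ϕ‖_∞ ≤ δ`. -/
def GoodEvent (Ω : Set (Euc N)) (ϕ : Euc N → ℝ) {n : ℕ} (z : Fin n → Euc N)
    (ρ δ : ℝ) : Prop :=
  ∃ U : Fin n → Set (Euc N),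
    (∀ i, MeasurableSet (U i)) ∧
    Pairwise (Function.onFun Disjoint U) ∧
    (⋃ i, U i) = Ω ∧
    (∀ i, z i ∈ U i ∧ U i ⊆ Metric.ball (z i) ρ) ∧
    ∃ ϕε : Euc N → ℝ,
      (∀ x, 0 ≤ ϕε x) ∧ (∃ M : ℝ, ∀ x, ϕε x ≤ M) ∧
      (∀ i, ∫ y in U i, ϕε y = 1 / (n : ℝ)) ∧
      (∀ x ∈ Ω, |ϕε x - ϕ x| ≤ δ)

/-- The good event together with the associated transport map `T` (`T = z_i` on `U_i`). -/
def GoodEventT (Ω : Set (Euc N)) (ϕ : Euc N → ℝ) {n : ℕ} (z : Fin n → Euc N)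
    (ρ δ : ℝ) (T : Euc N → Euc N) : Prop :=
  ∃ U : Fin n → Set (Euc N),
    (∀ i, MeasurableSet (U i)) ∧
    Pairwise (Function.onFun Disjoint U) ∧
    (⋃ i, U i) = Ω ∧
    (∀ i, z i ∈ U i ∧ U i ⊆ Metric.ball (z i) ρ) ∧
    (∀ i, ∀ x ∈ U i, T x = z i) ∧
    ∃ ϕε : Euc N → ℝ,
      (∀ x, 0 ≤ ϕε x) ∧ (∃ M : ℝ, ∀ x, ϕε x ≤ M) ∧
      (∀ i, ∫ y in U i, ϕε y = 1 / (n : ℝ)) ∧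
      (∀ x ∈ Ω, |ϕε x - ϕ x| ≤ δ)

/-- The sequence conditions: `n_k → ∞`, `ε_k → 0`, `ε_k ∈ (0, ε₀)` and
`liminf_k 2 n_k exp(−c₀ n_k ε_k^{3N+4+(N+2)a}) < 1`. -/
def SeqConditions (N : ℕ) (c0 a ε0 : ℝ) (n : ℕ → ℕ) (ε : ℕ → ℝ) : Prop :=
  Tendsto n atTop atTop ∧ Tendsto ε atTop (nhds 0) ∧ (∀ k, ε k ∈ Set.Ioo 0 ε0) ∧
  Filter.liminf (fun k => 2 * (n k : ℝ) *
    Real.exp (-c0 * (n k : ℝ) * ε k ^ (3 * (N : ℝ) + 4 + ((N : ℝ) + 2) * a))) atTop < 1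

/-- A C² cutoff function: `Φ ≡ 1` on `[0,1]`, decreasing to `0` on `[1,2]`, `Φ ≡ 0` on `[2,∞)`,
with vanishing first and second derivatives at `1` and `2`. -/
structure IsCutoff (Φ : ℝ → ℝ) : Prop where
  contDiff : ContDiffOn ℝ 2 Φ (Set.Ici 0)
  mem_Icc : ∀ s ∈ Set.Ici (0 : ℝ), Φ s ∈ Set.Icc (0 : ℝ) 1
  one_on : ∀ s ∈ Set.Icc (0 : ℝ) 1, Φ s = 1
  anti : AntitoneOn Φ (Set.Icc 1 2)
  zero_on : ∀ s ∈ Set.Ici (2 : ℝ), Φ s = 0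
  d1_one : deriv Φ 1 = 0
  d2_one : deriv (deriv Φ) 1 = 0
  d1_two : deriv Φ 2 = 0
  d2_two : deriv (deriv Φ) 2 = 0

/-- `L ψ(x) = inf_{z ∈ S} ω(z,x)(ψ(z)−ψ(x)) + sup_{z ∈ S} ω(z,x)(ψ(z)−ψ(x))`
with `ω(z,x) = Φ(|z−x|/ε)`. -/
def wOp (Φ : ℝ → ℝ) (ε : ℝ) (S : Set (Euc N)) (ψ : Euc N → ℝ) (x : Euc N) : ℝ :=
  sInf ((fun z => Φ (dist z x / ε) * (ψ z - ψ x)) '' S)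
    + sSup ((fun z => Φ (dist z x / ε) * (ψ z - ψ x)) '' S)

/-- The `C¹` norm of `ψ` on a set `S`. -/
def c1normOn (ψ : Euc N → ℝ) (S : Set (Euc N)) : ℝ :=
  sSup ((fun y => |ψ y| + ‖fderiv ℝ ψ y‖) '' S)

/-- The `C²` norm of `ψ` on a set `S`. -/
def c2normOn (ψ : Euc N → ℝ) (S : Set (Euc N)) : ℝ :=
  sSup ((fun y => |ψ y| + ‖fderiv ℝ ψ y‖ + ‖iteratedFDeriv ℝ 2 ψ y‖) '' S)
/-! Centre each `ψ(Yᵢ)`. The centred summands are bounded by `2‖ψ‖_∞` and, since the law of `Yᵢ`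
has density at most `‖f‖_∞` and `ψ` vanishes off `Ω`, have variance at most
`‖f‖_∞ ‖ψ‖_∞² |Ω|`. On `|s| ≤ 1/(2‖ψ‖_∞)` the bound `eˣ ≤ 1 + x + x²` (valid for `x ≤ 1`) then
gives `E e^{s Xᵢ} ≤ e^{s² Var}`, and Chernoff's bound for the sum, at `s = λ/(2‖ψ‖_∞)` and
applied to both tails, yields the claim. -/

open Real

lemma Real.exp_le_one_add_add_sq {y : ℝ} (hy : y ≤ 1) : exp y ≤ 1 + y + y ^ 2 := by
  rcases le_or_gt y (-1) with hy' | hy'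
  · nlinarith [exp_le_one_iff.2 (hy'.trans (by norm_num) : y ≤ 0)]
  · linarith [(abs_le.1 (abs_exp_sub_one_sub_id_le (abs_le.2 ⟨hy'.le, hy⟩))).2]

lemma ae_norm_le_lpNorm_top_restrict {α E : Type*} [MeasurableSpace α] [NormedAddCommGroup E]
    {μ : Measure α} {s : Set α} {g : α → E} (hs : MeasurableSet s)
    (hg : MemLp g ∞ (μ.restrict s)) (hgs : ∀ x ∉ s, g x = 0) :
    ∀ᵐ x ∂μ, ‖g x‖ ≤ lpNorm g ∞ (μ.restrict s) := by
  filter_upwards [(ae_restrict_iff' hs).1 (ae_le_lpNorm_exponent_top hg)] with x hx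
  by_cases hxs : x ∈ s
  · exact hx hxs
  · simp [hgs x hxs]

lemma integral_sq_withDensity_le {α : Type*} [MeasurableSpace α] {μ : Measure α}
    {f g : α → ℝ} {s : Set α} {M B : ℝ} (hs : MeasurableSet s) (hμs : μ s ≠ ∞) (hM : 0 ≤ M)
    (hfM : ∀ x, f x ≤ M) (hgB : ∀ᵐ x ∂μ, |g x| ≤ B) (hgs : ∀ x ∉ s, g x = 0) :
    ∫ x, g x ^ 2 ∂μ.withDensity (fun x => ENNReal.ofReal (f x)) ≤ M * μ.real s * B ^ 2 := by
  set ν := μ.withDensity (fun x => ENNReal.ofReal (f x))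
  have hνs : ν s ≤ ENNReal.ofReal M * μ s := by
    rw [withDensity_apply _ hs, ← setLIntegral_const]
    exact lintegral_mono fun x => ENNReal.ofReal_le_ofReal (hfM x)
  have hνs_fin : ν s ≠ ∞ := ne_top_of_le_ne_top (by finiteness) hνs
  have hg_le : ∀ᵐ x ∂ν, g x ^ 2 ≤ s.indicator (fun _ => B ^ 2) x := by
    filter_upwards [(withDensity_absolutelyContinuous μ _).ae_le hgB] with x hx
    by_cases hxs : x ∈ s
    · simpa [hxs, sq_abs] using pow_le_pow_left₀ (abs_nonneg _) hx 2
    · simp [hxs, hgs x hxs]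
  calc ∫ x, g x ^ 2 ∂ν ≤ ∫ x, s.indicator (fun _ => B ^ 2) x ∂ν :=
        integral_mono_of_nonneg (ae_of_all _ fun x => sq_nonneg _)
          ((integrable_indicator_iff hs).2 (integrableOn_const hνs_fin)) hg_le
    _ = ν.real s * B ^ 2 := by rw [integral_indicator_const _ hs, smul_eq_mul]
    _ ≤ M * μ.real s * B ^ 2 := by
        gcongr
        simpa [measureReal_def, ENNReal.toReal_mul, hM] using
          ENNReal.toReal_mono (by finiteness) hνs

lemma variance_comp_le_of_map_eq_withDensity {Θ α : Type*} [MeasurableSpace Θ]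
    [MeasurableSpace α] {P : Measure Θ} [IsProbabilityMeasure P] {μ : Measure α} {Y : Θ → α}
    {f g : α → ℝ} {s : Set α} {M B : ℝ} (hY : AEMeasurable Y P) (hg : Measurable g)
    (hlaw : P.map Y = μ.withDensity (fun x => ENNReal.ofReal (f x))) (hs : MeasurableSet s)
    (hμs : μ s ≠ ∞) (hM : 0 ≤ M) (hfM : ∀ x, f x ≤ M) (hgB : ∀ᵐ x ∂μ, |g x| ≤ B)
    (hgs : ∀ x ∉ s, g x = 0) :
    Var[fun θ => g (Y θ); P] ≤ M * μ.real s * B ^ 2 :=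
  calc Var[fun θ => g (Y θ); P] ≤ ∫ θ, g (Y θ) ^ 2 ∂P :=
        variance_le_expectation_sq (X := fun θ => g (Y θ))
          (hg.comp_aemeasurable hY).aestronglyMeasurable
    _ = ∫ x, g x ^ 2 ∂P.map Y := (integral_map hY (hg.pow_const 2).aestronglyMeasurable).symm
    _ ≤ M * μ.real s * B ^ 2 := hlaw ▸ integral_sq_withDensity_le hs hμs hM hfM hgB hgs

lemma integrable_exp_mul_of_abs_le {Ω : Type*} [MeasurableSpace Ω] {μ : Measure Ω}
    [IsFiniteMeasure μ] {X : Ω → ℝ} {c : ℝ} (hX : AEMeasurable X μ) (hc : ∀ᵐ ω ∂μ, |X ω| ≤ c)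
    (s : ℝ) : Integrable (fun ω => exp (s * X ω)) μ := by
  refine Integrable.of_bound (hX.const_mul s).exp.aestronglyMeasurable (exp (|s| * c)) ?_
  filter_upwards [hc] with ω hω
  rw [norm_of_nonneg (exp_pos _).le, exp_le_exp]
  calc s * X ω ≤ |s| * |X ω| := (le_abs_self _).trans (abs_mul _ _).le
    _ ≤ |s| * c := by gcongr

section Bernstein

variable {Ω ι : Type*} [MeasurableSpace Ω] {P : Measure Ω} [IsProbabilityMeasure P]

lemma mgf_le_exp_sq_mul_of_abs_le {X : Ω → ℝ} {c v s : ℝ} (hX : AEMeasurable X P)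
    (hc : ∀ᵐ ω ∂P, |X ω| ≤ c) (hmean : P[X] = 0) (hsq : ∫ ω, X ω ^ 2 ∂P ≤ v)
    (hs : |s| * c ≤ 1) : mgf X P s ≤ exp (s ^ 2 * v) := by
  have hXint : Integrable X P :=
    Integrable.of_bound hX.aestronglyMeasurable c (by simpa only [norm_eq_abs] using hc)
  have hX2int : Integrable (fun ω => X ω ^ 2) P :=
    Integrable.of_bound (hX.pow_const 2).aestronglyMeasurable (c ^ 2) (by
      filter_upwards [hc] with ω hω
      simpa [sq_abs] using pow_le_pow_left₀ (abs_nonneg _) hω 2)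
  have hpointwise : ∀ᵐ ω ∂P, exp (s * X ω) ≤ 1 + s * X ω + s ^ 2 * X ω ^ 2 := by
    filter_upwards [hc] with ω hω
    have hsX : s * X ω ≤ 1 := calc
      s * X ω ≤ |s| * |X ω| := (le_abs_self _).trans (abs_mul _ _).le
      _ ≤ |s| * c := by gcongr
      _ ≤ 1 := hs
    linarith [exp_le_one_add_add_sq hsX, mul_pow s (X ω) 2]
  have hlin : Integrable (fun ω => 1 + s * X ω) P := (integrable_const 1).add (hXint.const_mul s)
  calc mgf X P s ≤ ∫ ω, (1 + s * X ω + s ^ 2 * X ω ^ 2) ∂P :=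
        integral_mono_ae (integrable_exp_mul_of_abs_le hX hc s)
          (hlin.add (hX2int.const_mul _)) hpointwise
    _ = 1 + s ^ 2 * ∫ ω, X ω ^ 2 ∂P := by
        rw [integral_add hlin (hX2int.const_mul _),
          integral_add (integrable_const 1) (hXint.const_mul s), integral_const_mul,
          integral_const_mul, hmean]
        simp
    _ ≤ 1 + s ^ 2 * v := by gcongr
    _ ≤ exp (s ^ 2 * v) := by linarith [add_one_le_exp (s ^ 2 * v)]

variable [Fintype ι] {X : ι → Ω → ℝ}

lemma measureReal_sum_ge_le_exp (hXm : ∀ i, Measurable (X i)) (hindep : iIndepFun X P)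
    {c v t : ℝ} (hc : ∀ i, ∀ᵐ ω ∂P, |X i ω| ≤ c) (hmean : ∀ i, P[X i] = 0)
    (hsq : ∀ i, ∫ ω, X i ω ^ 2 ∂P ≤ v) (ht : 0 ≤ t) (htc : t * c ≤ 1) (T : ℝ) :
    P.real {ω | T ≤ ∑ i, X i ω} ≤ exp (-t * T + Fintype.card ι * (t ^ 2 * v)) := by
  have hmgf : mgf (∑ i, X i) P t ≤ exp (Fintype.card ι * (t ^ 2 * v)) := by
    rw [hindep.mgf_sum hXm, exp_nat_mul]
    calc ∏ i, mgf (X i) P t ≤ ∏ _i : ι, exp (t ^ 2 * v) :=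
          Finset.prod_le_prod (fun i _ => mgf_nonneg) fun i _ =>
            mgf_le_exp_sq_mul_of_abs_le (hXm i).aemeasurable (hc i) (hmean i) (hsq i)
              (by rwa [abs_of_nonneg ht])
      _ = exp (t ^ 2 * v) ^ Fintype.card ι := by rw [Finset.prod_const, Finset.card_univ]
  have hchernoff := measure_ge_le_exp_mul_mgf (X := ∑ i, X i) T ht
    (hindep.integrable_exp_mul_sum (s := Finset.univ) hXm fun i _ =>
      integrable_exp_mul_of_abs_le (hXm i).aemeasurable (hc i) t)
  simp only [Finset.sum_apply] at hchernoff
  rw [exp_add]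
  exact hchernoff.trans (mul_le_mul_of_nonneg_left hmgf (exp_pos _).le)

lemma measure_abs_sum_gt_le (hXm : ∀ i, Measurable (X i)) (hindep : iIndepFun X P)
    {c κ lam : ℝ} (hc0 : 0 ≤ c) (hc : ∀ i, ∀ᵐ ω ∂P, |X i ω| ≤ c) (hmean : ∀ i, P[X i] = 0)
    (hsq : ∀ i, ∫ ω, X i ω ^ 2 ∂P ≤ κ * c ^ 2) (hlam0 : 0 ≤ lam) (hlam1 : lam ≤ 1) :
    P {ω | 2 * Fintype.card ι * κ * c * lam < |∑ i, X i ω|}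
      ≤ ENNReal.ofReal (2 * exp (-(Fintype.card ι * κ * lam ^ 2))) := by
  rcases hc0.eq_or_lt with rfl | hc_pos
  · have hzero : ∀ᵐ ω ∂P, ∑ i, X i ω = 0 := by
      filter_upwards [ae_all_iff.2 hc] with ω hω
      exact Finset.sum_eq_zero fun i _ => abs_nonpos_iff.1 (hω i)
    have hnull : P {ω | 2 * Fintype.card ι * κ * 0 * lam < |∑ i, X i ω|} = 0 := by
      rw [measure_eq_zero_iff_ae_notMem]
      filter_upwards [hzero] with ω hω
      simp [hω]
    rw [hnull]
    exact zero_le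
  set T := 2 * Fintype.card ι * κ * c * lam
  set t := lam / c
  have hexponent : -t * T + Fintype.card ι * (t ^ 2 * (κ * c ^ 2))
      = -(Fintype.card ι * κ * lam ^ 2) := by
    simp only [T, t]
    field_simp
    ring
  have ht : 0 ≤ t := div_nonneg hlam0 hc_pos.le
  have htc : t * c ≤ 1 := by rwa [div_mul_cancel₀ _ hc_pos.ne']
  have hupper := measureReal_sum_ge_le_exp hXm hindep hc hmean hsq ht htc T
  have hlower := measureReal_sum_ge_le_exp (X := fun i ω => -X i ω)
    (fun i => (hXm i).neg) (hindep.comp (fun _ x => -x) fun _ => measurable_neg)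
    (by simpa only [abs_neg] using hc) (fun i => by rw [integral_neg, hmean i, neg_zero])
    (by simpa only [neg_sq] using hsq) ht htc T
  rw [hexponent] at hupper hlower
  refine (ENNReal.le_ofReal_iff_toReal_le (measure_ne_top _ _) (by positivity)).2 ?_
  calc P.real {ω | T < |∑ i, X i ω|}
      ≤ P.real ({ω | T ≤ ∑ i, X i ω} ∪ {ω | T ≤ ∑ i, -X i ω}) := by
        refine measureReal_mono (fun ω (hω : T < |∑ i, X i ω|) => ?_)
        rcases lt_abs.1 hω with h | h
        · exact Or.inl h.le
        · exact Or.inr (show T ≤ ∑ i, -X i ω by rw [Finset.sum_neg_distrib]; exact h.le)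
    _ ≤ P.real {ω | T ≤ ∑ i, X i ω} + P.real {ω | T ≤ ∑ i, -X i ω} := measureReal_union_le _ _
    _ ≤ 2 * exp (-(Fintype.card ι * κ * lam ^ 2)) := by linarith

theorem measure_abs_sum_sub_integral_gt_le (hXm : ∀ i, Measurable (X i))
    (hindep : iIndepFun X P) {b κ lam : ℝ} (hb0 : 0 ≤ b) (hb : ∀ i, ∀ᵐ ω ∂P, |X i ω| ≤ b)
    (hvar : ∀ i, Var[X i; P] ≤ κ * b ^ 2) (hlam0 : 0 ≤ lam) (hlam1 : lam ≤ 1) :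
    P {ω | Fintype.card ι * κ * b * lam < |∑ i, X i ω - ∫ ω', ∑ i, X i ω' ∂P|}
      ≤ ENNReal.ofReal (2 * exp (-(Fintype.card ι * κ * lam ^ 2 / 4))) := by
  have hint : ∀ i, Integrable (X i) P := fun i =>
    Integrable.of_bound (hXm i).aestronglyMeasurable b (by simpa only [norm_eq_abs] using hb i)
  have hcentred : ∀ ω, ∑ i, X i ω - ∫ ω', ∑ i, X i ω' ∂P = ∑ i, (X i ω - P[X i]) := by
    intro ω
    rw [integral_finsetSum _ fun i _ => hint i, Finset.sum_sub_distrib]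
  have hindep' : iIndepFun (fun i ω => X i ω - P[X i]) P :=
    hindep.comp (fun i x => x - ∫ ω, X i ω ∂P) fun _ => measurable_sub_const _
  have hbound : ∀ i, ∀ᵐ ω ∂P, |X i ω - P[X i]| ≤ 2 * b := fun i => by
    have hmean_le : |P[X i]| ≤ b := by
      have := norm_integral_le_of_norm_le_const (f := X i) (by simpa only [norm_eq_abs] using hb i)
      rwa [probReal_univ, mul_one, norm_eq_abs] at this
    filter_upwards [hb i] with ω hω
    linarith [abs_sub (X i ω) (P[X i])]
  have hmean : ∀ i, ∫ ω, (X i ω - P[X i]) ∂P = 0 := fun i => by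
    rw [integral_sub (hint i) (integrable_const _), integral_const]
    simp
  have hsq : ∀ i, ∫ ω, (X i ω - P[X i]) ^ 2 ∂P ≤ κ / 4 * (2 * b) ^ 2 := fun i => by
    rw [← variance_eq_integral (hXm i).aemeasurable]
    linarith [hvar i]
  simp_rw [hcentred]
  rw [show Fintype.card ι * κ * b * lam = 2 * Fintype.card ι * (κ / 4) * (2 * b) * lam by ring,
    show Fintype.card ι * κ * lam ^ 2 / 4 = Fintype.card ι * (κ / 4) * lam ^ 2 by ring]
  exact measure_abs_sum_gt_le (fun i => (hXm i).sub_const _) hindep' (by positivity) hbound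
    hmean hsq hlam0 hlam1

end Bernstein

theorem bernstein_inequality_general
    {N n : ℕ} {Θ : Type*} [MeasurableSpace Θ] (P : Measure Θ) [IsProbabilityMeasure P]
    (Y : Fin n → Θ → Euc N)
    (hmeas : ∀ i, Measurable (Y i))
    (hindep : iIndepFun Y P)
    (f : Euc N → ℝ) (hf0 : ∀ x, 0 ≤ f x) (hfb : ∃ M : ℝ, ∀ x, f x ≤ M)
    (hlaw : ∀ i, Measure.map (Y i) P = volume.withDensity (fun x => ENNReal.ofReal (f x)))
    (Ωset : Set (Euc N)) (hdom : IsBoundedDomain Ωset)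
    (ψ : Euc N → ℝ) (hψm : Measurable ψ) (hψb : ∃ M : ℝ, ∀ x, |ψ x| ≤ M)
    (hsupp : tsupport ψ ⊆ Ωset)
    (lam : ℝ) (hlam0 : 0 ≤ lam) (hlam1 : lam ≤ 1) :
    P {θ | |(∑ i, ψ (Y i θ)) - ∫ θ', (∑ i, ψ (Y i θ')) ∂P|
        > sSup (Set.range fun x => |f x|) * (eLpNorm ψ ⊤ (volume.restrict Ωset)).toReal
          * n * (volume Ωset).toReal * lam}
      ≤ ENNReal.ofReal (2 * Real.exp (-(1 / 4) * sSup (Set.range fun x => |f x|)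
          * n * (volume Ωset).toReal * lam ^ 2)) := by
  obtain ⟨Mf, hMf⟩ := hfb
  obtain ⟨Mψ, hMψ⟩ := hψb
  set M := sSup (Set.range fun x => |f x|)
  have hbdd : BddAbove (Set.range fun x => |f x|) :=
    ⟨Mf, by rintro _ ⟨x, rfl⟩; simpa [abs_of_nonneg (hf0 x)] using hMf x⟩
  have hfM : ∀ x, f x ≤ M := fun x => (le_abs_self _).trans (le_csSup hbdd ⟨x, rfl⟩)
  have hM : 0 ≤ M := Real.sSup_nonneg (by rintro _ ⟨x, rfl⟩; exact abs_nonneg _)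
  have hΩ : MeasurableSet Ωset := hdom.1.measurableSet
  have hψs : ∀ x ∉ Ωset, ψ x = 0 := fun x hx =>
    image_eq_zero_of_notMem_tsupport fun h => hx (hsupp h)
  have hψ_top : MemLp ψ ∞ (volume.restrict Ωset) :=
    memLp_top_of_bound hψm.aestronglyMeasurable Mψ (ae_of_all _ hMψ)
  rw [toReal_eLpNorm hψ_top.aestronglyMeasurable]
  set B := lpNorm ψ ∞ (volume.restrict Ωset)
  have hψB : ∀ᵐ x, |ψ x| ≤ B := ae_norm_le_lpNorm_top_restrict hΩ hψ_top hψs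
  have hψY : ∀ i, ∀ᵐ θ ∂P, |ψ (Y i θ)| ≤ B := fun i =>
    Measure.QuasiMeasurePreserving.ae ⟨hmeas i, hlaw i ▸ withDensity_absolutelyContinuous _ _⟩ hψB
  have hvar : ∀ i, Var[fun θ => ψ (Y i θ); P] ≤ M * volume.real Ωset * B ^ 2 := fun i =>
    variance_comp_le_of_map_eq_withDensity (hmeas i).aemeasurable hψm (hlaw i) hΩ
      hdom.2.2.measure_lt_top.ne hM hfM hψB hψs
  have key := measure_abs_sum_sub_integral_gt_le (X := fun i θ => ψ (Y i θ))
    (fun i => hψm.comp (hmeas i)) (hindep.comp (fun _ => ψ) fun _ => hψm) lpNorm_nonneg hψY hvar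
    hlam0 hlam1
  rw [Fintype.card_fin, measureReal_def] at key
  set V := (volume Ωset).toReal
  rwa [show M * B * n * V * lam = n * (M * V) * B * lam by ring,
    show -(1 / 4) * M * n * V * lam ^ 2 = -(n * (M * V) * lam ^ 2 / 4) by ring]

/-- Bernstein-type inequality for sums of functions of i.i.d. random variables with
bounded Lebesgue density. -/
theorem bernstein_inequality
    {N n : ℕ} {Θ : Type*} [MeasurableSpace Θ] (P : Measure Θ) [IsProbabilityMeasure P]
    (Y : Fin n → Θ → Euc N)
    (hmeas : ∀ i, Measurable (Y i))
    (hindep : iIndepFun Y P)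
    (f : Euc N → ℝ) (hf0 : ∀ x, 0 ≤ f x) (hfb : ∃ M : ℝ, ∀ x, f x ≤ M)
    (hlaw : ∀ i, Measure.map (Y i) P = volume.withDensity (fun x => ENNReal.ofReal (f x)))
    (Ωset : Set (Euc N)) (hdom : IsBoundedDomain Ωset)
    (ψ : Euc N → ℝ) (hψm : Measurable ψ) (hψb : ∃ M : ℝ, ∀ x, |ψ x| ≤ M)
    (hsupp : tsupport ψ ⊆ Ωset) (hcpt : IsCompact (tsupport ψ))
    (lam : ℝ) (hlam0 : 0 ≤ lam) (hlam1 : lam ≤ 1) :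
    P {θ | |(∑ i, ψ (Y i θ)) - ∫ θ', (∑ i, ψ (Y i θ')) ∂P|
        > sSup (Set.range fun x => |f x|) * (eLpNorm ψ ⊤ (volume.restrict Ωset)).toReal
          * n * (volume Ωset).toReal * lam}
      ≤ ENNReal.ofReal (2 * Real.exp (-(1 / 4) * sSup (Set.range fun x => |f x|)
          * n * (volume Ωset).toReal * lam ^ 2)) :=
  bernstein_inequality_general P Y hmeas hindep f hf0 hfb hlaw Ωset hdom ψ hψm hψb hsupp lam hlam0
    hlam1
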